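/- For a zero-mean p-variate random signal x on a graph G with Laplacian L = U Λ U* (U unitary), the matrices Cov(x_a, x_b) and L are simultaneously diagonalizable (by U) for all a, b ∈ {0,…,p−1} if and only if the multivariate GFT spectra satisfy Cov(x̂_a(λ_k), x̂_b(λ_l)) = 0 whenever k ≠ l. -/

import Mathlib

/-
For each pair of components `a, b`, the covariance of the spectra is the conjugated matrix
`Uᴴ Cov(x_a, x_b) U` read off entrywise, by bilinearity of the integral. A matrix is diagonalized
by the unitary `U` exactly when this conjugate is diagonal, i.e. when its off-diagonal entries,
the cross-frequency covariances, vanish.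
-/

open Matrix MeasureTheory

/-- `A` is diagonalized by the unitary matrix `U`. -/
def DiagBy {N : ℕ} (U A : Matrix (Fin N) (Fin N) ℂ) : Prop :=
  ∃ d : Fin N → ℂ, A = U * Matrix.diagonal d * Uᴴ

theorem diagBy_iff_isDiag_conjTranspose_mul_mul {N : ℕ} {U : Matrix (Fin N) (Fin N) ℂ}
    (hU : U ∈ unitaryGroup (Fin N) ℂ) (A : Matrix (Fin N) (Fin N) ℂ) :
    DiagBy U A ↔ (Uᴴ * A * U).IsDiag := by
  have hUU : Uᴴ * U = 1 := by simpa only [star_eq_conjTranspose] using mem_unitaryGroup_iff'.mp hU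
  have hUU' : U * Uᴴ = 1 := by simpa only [star_eq_conjTranspose] using mem_unitaryGroup_iff.mp hU
  constructor
  · rintro ⟨d, rfl⟩
    have hconj : Uᴴ * (U * diagonal d * Uᴴ) * U = diagonal d := by
      rw [← Matrix.mul_assoc, ← Matrix.mul_assoc, hUU, Matrix.one_mul, Matrix.mul_assoc, hUU,
        Matrix.mul_one]
    rw [hconj]
    exact isDiag_diagonal d
  · intro hdiag
    refine ⟨(Uᴴ * A * U).diag, ?_⟩
    calc A = (U * Uᴴ) * A * (U * Uᴴ) := by rw [hUU', Matrix.one_mul, Matrix.mul_one]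
      _ = U * (Uᴴ * A * U) * Uᴴ := by simp only [Matrix.mul_assoc]
      _ = U * diagonal (Uᴴ * A * U).diag * Uᴴ := by rw [hdiag.diagonal_diag]

theorem conjTranspose_mul_mul_apply {n α : Type*} [Fintype n] [NonUnitalSemiring α] [StarRing α]
    (U A : Matrix n n α) (k l : n) :
    (Uᴴ * A * U) k l = ∑ i, ∑ j, star (U i k) * A i j * U j l := by
  simp only [mul_apply, conjTranspose_apply, Finset.sum_mul]
  rw [Finset.sum_comm]

theorem integral_sum_mul_conj_sum {ι Ω : Type*} [Fintype ι] [MeasurableSpace Ω] {μ : Measure Ω}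
    (f g : ι → Ω → ℝ) (hfg : ∀ i j, Integrable (fun ω => f i ω * g j ω) μ) (c d : ι → ℂ) :
    ∫ ω, (∑ i, (f i ω : ℂ) * c i) * starRingEnd ℂ (∑ j, (g j ω : ℂ) * d j) ∂μ
      = ∑ i, ∑ j, c i * ((∫ ω, f i ω * g j ω ∂μ : ℝ) : ℂ) * starRingEnd ℂ (d j) := by
  have hterm : ∀ i j, Integrable
      (fun ω => c i * ((f i ω * g j ω : ℝ) : ℂ) * starRingEnd ℂ (d j)) μ :=
    fun i j => ((hfg i j).ofReal.const_mul _).mul_const _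
  calc ∫ ω, (∑ i, (f i ω : ℂ) * c i) * starRingEnd ℂ (∑ j, (g j ω : ℂ) * d j) ∂μ
      = ∫ ω, ∑ i, ∑ j, c i * ((f i ω * g j ω : ℝ) : ℂ) * starRingEnd ℂ (d j) ∂μ := by
        congr 1; ext ω
        simp only [map_sum, map_mul, Complex.conj_ofReal, Finset.sum_mul_sum]
        refine Finset.sum_congr rfl fun i _ => Finset.sum_congr rfl fun j _ => ?_
        push_cast; ring
    _ = ∑ i, ∑ j, ∫ ω, c i * ((f i ω * g j ω : ℝ) : ℂ) * starRingEnd ℂ (d j) ∂μ := by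
        rw [integral_finsetSum _ fun i _ => integrable_finsetSum _ fun j _ => hterm i j]
        exact Finset.sum_congr rfl fun i _ => integral_finsetSum _ fun j _ => hterm i j
    _ = ∑ i, ∑ j, c i * ((∫ ω, f i ω * g j ω ∂μ : ℝ) : ℂ) * starRingEnd ℂ (d j) := by
        simp only [integral_mul_const, integral_const_mul, integral_complex_ofReal]

theorem multivariate_simdiag_iff_spectral_uncorrelated_general (N p : ℕ)
    {Ω : Type*} [MeasurableSpace Ω] (μ : Measure Ω)
    (U : Matrix (Fin N) (Fin N) ℂ)
    (hU : U ∈ Matrix.unitaryGroup (Fin N) ℂ)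
    (x : Fin p → Fin N → Ω → ℝ)
    (hint : ∀ a b i j, Integrable (fun ω => x a i ω * x b j ω) μ) :
    -- the multivariate GFT spectrum x̂_a(λ_k) = Σ_i x_a(i) conj(u_k(i))
    let xhat : Fin p → Fin N → Ω → ℂ :=
      fun a k ω => ∑ i, (x a i ω : ℂ) * (starRingEnd ℂ) (U i k)
    (∀ a b, DiagBy U (Matrix.of fun i j =>
        ((∫ ω, x a i ω * x b j ω ∂μ : ℝ) : ℂ)))
      ↔ (∀ a b (k l : Fin N), k ≠ l →
          (∫ ω, xhat a k ω * (starRingEnd ℂ) (xhat b l ω) ∂μ) = 0) := by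
  intro xhat
  have hspectral : ∀ a b k l, ∫ ω, xhat a k ω * starRingEnd ℂ (xhat b l ω) ∂μ
      = (Uᴴ * Matrix.of (fun i j => ((∫ ω, x a i ω * x b j ω ∂μ : ℝ) : ℂ)) * U) k l := by
    intro a b k l
    rw [conjTranspose_mul_mul_apply]
    simpa only [xhat, of_apply, starRingEnd_apply, star_star] using
      integral_sum_mul_conj_sum (x a) (x b) (hint a b) (fun i => starRingEnd ℂ (U i k))
        (fun j => starRingEnd ℂ (U j l))
  simp only [diagBy_iff_isDiag_conjTranspose_mul_mul hU, IsDiag, Pairwise, hspectral]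

/-- Corollary of the paper for multivariate graph signals: for a zero-mean
`p`-variate random signal `x` on a graph `G` with Laplacian `L = U Λ Uᴴ`
(`U` unitary), the matrices `Cov(x_a, x_b)` and `L` are simultaneously
diagonalizable (by `U`) for all `a, b` iff the multivariate GFT spectra
satisfy `Cov(x̂_a(λ_k), x̂_b(λ_l)) = 0` whenever `k ≠ l`. -/
theorem multivariate_simdiag_iff_spectral_uncorrelated (N p : ℕ)
    {Ω : Type*} [MeasurableSpace Ω] (μ : Measure Ω) [IsProbabilityMeasure μ]
    (U : Matrix (Fin N) (Fin N) ℂ)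
    (hU : U ∈ Matrix.unitaryGroup (Fin N) ℂ)
    (lam : Fin N → ℝ)
    (L : Matrix (Fin N) (Fin N) ℂ)
    (hL : L = U * Matrix.diagonal (fun k => (lam k : ℂ)) * Uᴴ)
    (x : Fin p → Fin N → Ω → ℝ)
    (hmeas : ∀ a i, Measurable (x a i))
    (hzero : ∀ a i, ∫ ω, x a i ω ∂μ = 0)
    (hint : ∀ a b i j, Integrable (fun ω => x a i ω * x b j ω) μ) :
    -- the multivariate GFT spectrum x̂_a(λ_k) = Σ_i x_a(i) conj(u_k(i))
    let xhat : Fin p → Fin N → Ω → ℂ :=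
      fun a k ω => ∑ i, (x a i ω : ℂ) * (starRingEnd ℂ) (U i k)
    (∀ a b, DiagBy U (Matrix.of fun i j =>
        ((∫ ω, x a i ω * x b j ω ∂μ : ℝ) : ℂ)))
      ↔ (∀ a b (k l : Fin N), k ≠ l →
          (∫ ω, xhat a k ω * (starRingEnd ℂ) (xhat b l ω) ∂μ) = 0) :=
  multivariate_simdiag_iff_spectral_uncorrelated_general N p μ U hU x hint
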